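/- Let U₁, U₂, V₁, V₂ be λH-terms. If U₁ →t V₁, U₂ →t V₂, and E(U₁) = E(U₂), then E(V₁) = E(V₂). -/

import Mathlib

/-- λH-terms: untyped λ-terms in de Bruijn notation with a distinguished
constant `H`. -/
inductive LamH : Type
  | var : ℕ → LamH
  | H : LamH
  | lam : LamH → LamH
  | app : LamH → LamH → LamH

namespace LamH

/-- Lift (shift by one) the de Bruijn indices ≥ `d`. -/
def lift : LamH → ℕ → LamH
  | var n, d => if n < d then var n else var (n + 1)
  | H, _ => H
  | lam u, d => lam (lift u (d + 1))
  | app u v, d => app (lift u d) (lift v d)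

/-- Capture-avoiding substitution `t[s/k]`. -/
def subst : LamH → ℕ → LamH → LamH
  | var n, k, s => if n = k then s else if k < n then var (n - 1) else var n
  | H, _, _ => H
  | lam u, k, s => lam (subst u (k + 1) (lift s 0))
  | app u v, k, s => app (subst u k s) (subst v k s)

/-- Head reduction `→t` contracting the head β-redex:
`λx̄.((λx.U) V) V₁ ... Vₖ →t λx̄.(U[V/x]) V₁ ... Vₖ`. -/
inductive Head : LamH → LamH → Prop
  | beta (u v : LamH) : Head (app (lam u) v) (subst u 0 v)
  | appL {u u' : LamH} (v : LamH) : Head u u' → (∀ w, u ≠ lam w) →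
      Head (app u v) (app u' v)
  | abs {u u' : LamH} : Head u u' → Head (lam u) (lam u')

/-- `headH t = true` iff `t` is of the form `H U₁ U₂ ... Uₙ` with `n ≥ 0`. -/
def headH : LamH → Bool
  | H => true
  | app u _ => headH u
  | _ => false

/-- Remove the head occurrence of `H`: `dropH (H U₁ U₂ ... Uₙ) = U₁ U₂ ... Uₙ`
(for `n ≥ 1`). -/
def dropH : LamH → LamH
  | app H v => v
  | app u v => app (dropH u) v
  | t => t

theorem dropH_app_size_lt : ∀ u v : LamH, headH u = true →
    sizeOf (dropH (app u v)) < sizeOf (app u v) := by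
  intro u
  induction u with
  | var n => intro v h; simp [headH] at h
  | H => intro v _; simp [dropH]
  | lam u ih => intro v h; simp [headH] at h
  | app u1 u2 ih1 ih2 =>
    intro v h
    have h1 : headH u1 = true := by simpa [headH] using h
    have : dropH (app (app u1 u2) v) = app (dropH (app u1 u2)) v := by
      cases u1 <;> rfl
    rw [this]
    have := ih1 u2 h1
    simp only [app.sizeOf_spec] at *
    omega

/-- The extraction map `E`: it erases `H` in head position of an application.
`E(x) = x`, `E(H) = H`, `E(λx.U) = λx.E(U)`,
`E(U V) = (E(U) E(V))` if `U` is not of the form `H U₁ ... Uₙ`, and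
`E(H U₁ U₂ ... Uₙ) = E(U₁ U₂ ... Uₙ)`. -/
def E : LamH → LamH
  | var n => var n
  | H => H
  | lam u => lam (E u)
  | app u v =>
    if h : headH u = true then E (dropH (app u v)) else app (E u) (E v)
termination_by t => sizeOf t
decreasing_by
  all_goals first
    | exact dropH_app_size_lt u v (by assumption)
    | (simp; omega)
    | simp

end LamH

/-! The extraction `E` is idempotent and commutes with lifting, and `E (u v)`, `E (u[v/k])`
depend only on the extractions of their parts. Consequently the head reduct `V` of `U` satisfies
`E V = E (headReduct (E U))`: since `U` is not `H`-headed, `E U` keeps the head redex of `U` in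
the same place. Hence `E V` is determined by `E U`. -/

namespace LamH

@[simp] theorem E_var (n : ℕ) : E (var n) = var n := by rw [E]

@[simp] theorem E_H : E H = H := by rw [E]

@[simp] theorem E_lam (u : LamH) : E (lam u) = lam (E u) := by rw [E]

theorem E_app_of_headH {u : LamH} (v : LamH) (h : headH u = true) :
    E (app u v) = E (dropH (app u v)) := by
  rw [E]; simp [h]

theorem E_app_of_headH_eq_false {u : LamH} (v : LamH) (h : headH u = false) :
    E (app u v) = app (E u) (E v) := by
  rw [E]; simp [h]

@[simp] theorem headH_app (u v : LamH) : headH (app u v) = headH u := rfl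

theorem dropH_app_app (a b v : LamH) : dropH (app (app a b) v) = app (dropH (app a b)) v := rfl

section Homomorphism

variable {f : LamH → LamH} (hH : f H = H) (happ : ∀ a b, f (app a b) = app (f a) (f b))
include hH happ

theorem headH_map {t : LamH} (ht : headH t = true) : headH (f t) = true := by
  induction t with
  | H => rw [hH]; rfl
  | app a b iha _ => rw [happ, headH_app]; exact iha ht
  | _ => simp [headH] at ht

theorem dropH_map {t : LamH} (ht : headH t = true) : dropH (f t) = f (dropH t) := by
  induction t with
  | H => rw [hH]; exact hH.symm
  | app a b iha _ =>
    cases a with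
    | H => rw [happ, hH]; rfl
    | app a₁ a₂ =>
      simp only [happ, dropH_app_app] at iha ⊢
      rw [iha ht]
    | _ => simp [headH] at ht
  | _ => simp [headH] at ht

end Homomorphism

theorem headH_lift (t : LamH) (d : ℕ) : headH (lift t d) = headH t := by
  induction t generalizing d with
  | var n => unfold lift; split <;> rfl
  | app u v ihu _ => exact ihu d
  | _ => rfl

theorem dropH_lift {t : LamH} (d : ℕ) (ht : headH t = true) :
    dropH (lift t d) = lift (dropH t) d :=
  dropH_map (f := (lift · d)) rfl (fun _ _ => rfl) ht

theorem headH_subst {t : LamH} (k : ℕ) (s : LamH) (ht : headH t = true) :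
    headH (subst t k s) = true :=
  headH_map (f := (subst · k s)) rfl (fun _ _ => rfl) ht

theorem dropH_subst {t : LamH} (k : ℕ) (s : LamH) (ht : headH t = true) :
    dropH (subst t k s) = subst (dropH t) k s :=
  dropH_map (f := (subst · k s)) rfl (fun _ _ => rfl) ht

theorem headH_E_eq_false {t : LamH} (h : headH t = false) : headH (E t) = false := by
  induction t with
  | app u v ihu _ => rw [E_app_of_headH_eq_false (u := u) v h]; exact ihu h
  | H => simp [headH] at h
  | _ => simp [headH]

theorem E_E (t : LamH) : E (E t) = E t := by
  induction t using E.induct with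
  | case1 | case2 => simp
  | case3 u ih => simp [ih]
  | case4 u v h ih => rw [E_app_of_headH v h, ih]
  | case5 u v h ihu ihv =>
    have h : headH u = false := by simpa using h
    rw [E_app_of_headH_eq_false v h, E_app_of_headH_eq_false _ (headH_E_eq_false h), ihu, ihv]

theorem E_lift (t : LamH) (d : ℕ) : E (lift t d) = lift (E t) d := by
  induction t using E.induct generalizing d with
  | case1 n => unfold lift; split <;> simp [*]
  | case2 => simp [lift]
  | case3 u ih => simp [lift, ih]
  | case4 u v h ih =>
    have hl : headH (lift u d) = true := by rwa [headH_lift]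
    rw [E_app_of_headH v h, ← ih, ← dropH_lift (t := app u v) d h]
    exact E_app_of_headH _ hl
  | case5 u v h ihu ihv =>
    have h : headH u = false := by simpa using h
    have hl : headH (lift u d) = false := by rwa [headH_lift]
    rw [E_app_of_headH_eq_false v h, lift, E_app_of_headH_eq_false _ hl, ihu, ihv]; rfl

theorem E_app_E_of_headH_eq_false {u : LamH} (v : LamH) (h : headH u = false) :
    E (app u v) = E (app (E u) (E v)) := by
  rw [E_app_of_headH_eq_false v h, E_app_of_headH_eq_false _ (headH_E_eq_false h), E_E, E_E]

theorem E_app_E (u v : LamH) : E (app u v) = E (app (E u) (E v)) := by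
  induction u using E.induct generalizing v with
  | case1 n => exact E_app_E_of_headH_eq_false v rfl
  | case2 => rw [E_app_of_headH v rfl, E_H, E_app_of_headH _ rfl]; exact (E_E v).symm
  | case3 u _ => exact E_app_E_of_headH_eq_false v rfl
  | case4 a b hab ih =>
    rw [E_app_of_headH (u := app a b) v hab, dropH_app_app, ih, E_app_of_headH b hab]
  | case5 a b hab _ _ => exact E_app_E_of_headH_eq_false v (by simpa using hab)

theorem E_subst (u : LamH) (k : ℕ) (v : LamH) :
    E (subst u k v) = E (subst (E u) k (E v)) := by
  induction u using E.induct generalizing k v with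
  | case1 n => unfold subst; split_ifs <;> simp [*, E_E]
  | case2 => simp [subst]
  | case3 u ih => simp [subst, ih, E_lift]
  | case4 u w h ih =>
    rw [E_app_of_headH w h, ← ih, ← dropH_subst (t := app u w) k v h]
    exact E_app_of_headH _ (headH_subst k v h)
  | case5 u w h ihu ihv =>
    have h : headH u = false := by simpa using h
    rw [E_app_of_headH_eq_false w h, subst, E_app_E, ihu, ihv, ← E_app_E]; rfl

theorem headH_eq_false_of_head {u u' : LamH} (h : Head u u') : headH u = false := by
  induction h with
  | beta | abs => rfl
  | appL _ _ _ ih => exact ih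

theorem E_ne_lam {u : LamH} (hu : ∀ w, u ≠ lam w) (hH : headH u = false) (w : LamH) :
    E u ≠ lam w := by
  cases u with
  | var n => simp
  | H => simp [headH] at hH
  | lam x => exact absurd rfl (hu x)
  | app a b => rw [E_app_of_headH_eq_false (u := a) b hH]; simp

def headReduct : LamH → LamH
  | lam u => lam (headReduct u)
  | app (lam u) v => subst u 0 v
  | app u v => app (headReduct u) v
  | t => t

theorem headReduct_app {u : LamH} (v : LamH) (hu : ∀ w, u ≠ lam w) :
    headReduct (app u v) = app (headReduct u) v := by
  cases u with
  | lam x => exact absurd rfl (hu x)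
  | _ => rfl

theorem E_eq_E_headReduct_E {U V : LamH} (h : Head U V) : E V = E (headReduct (E U)) := by
  induction h with
  | beta u v =>
    rw [E_app_of_headH_eq_false (u := lam u) v rfl, E_lam]
    exact E_subst u 0 v
  | @appL u u' w hu hne ih =>
    have hH := headH_eq_false_of_head hu
    rw [E_app_of_headH_eq_false w hH, headReduct_app _ (E_ne_lam hne hH), E_app_E, ih,
      ← E_E w, ← E_app_E, E_E]
  | abs _ ih => simp only [E_lam, headReduct, ih]

end LamH

/-- If `U₁ →t V₁`, `U₂ →t V₂`, and `E(U₁) = E(U₂)`, then `E(V₁) = E(V₂)`. -/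
theorem E_head_congr (U₁ U₂ V₁ V₂ : LamH)
    (h₁ : LamH.Head U₁ V₁) (h₂ : LamH.Head U₂ V₂)
    (hE : LamH.E U₁ = LamH.E U₂) : LamH.E V₁ = LamH.E V₂ := by
  rw [LamH.E_eq_E_headReduct_E h₁, LamH.E_eq_E_headReduct_E h₂, hE]
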